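/- arXiv:1704.04821 — 3 statements merged into one kernel-verified Lean document; each statement's English description precedes it below -/
import Mathlib

section
/- Let λ > 0 and let h_f, h_b : [0,1] → ℝ be continuous on [0,1] and twice differentiable on (0,1), satisfying h_f''(t) ≥ −λ·h_f'(t) and h_b''(t) ≥ λ·h_b'(t) for all t ∈ (0,1). If moreover h_f(t) + h_b(t) ≥ 0 for all t ∈ [0,1] and h_f(1) + h_b(1) = 0, then h_f(0) + h_b(1) ≤ (h_f(0) + h_b(0))/(1 − exp(−λ)). -/
/-!
If `h'' ≥ c h'` then `exp (-c t) h'` is nondecreasing, i.e. `h` is convex as a function of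
`exp (c t)`; by Cauchy's mean value theorem `h` lies below its chord in that variable. Adding the
chord bounds for `h_f` (`c = -λ`) and `h_b` (`c = λ`) and using `h_f(1) = -h_b(1)` gives,
on `(0,1)`,
`(1 - e^{-λ}) (h_f(t) + h_b(t)) ≤ (e^{-λt} - e^{-λ}) (h_f(0) + h_b(1) + (h_b(0) - h_b(1)) e^{λt})`.
Since the left side is nonnegative, so is the last factor, also at `t = 1` by continuity; this is
the claim after clearing the denominator.
-/

open Set Real

theorem chord_le_of_monotoneOn_div_deriv {f f' g g' : ℝ → ℝ} {a x b : ℝ}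
    (hax : a < x) (hxb : x < b)
    (hf : ContinuousOn f (Icc a b)) (hg : ContinuousOn g (Icc a b))
    (hff' : ∀ y ∈ Ioo a b, HasDerivAt f (f' y) y) (hgg' : ∀ y ∈ Ioo a b, HasDerivAt g (g' y) y)
    (hg'_pos : ∀ y ∈ Ioo a b, 0 < g' y) (hmono : MonotoneOn (fun y => f' y / g' y) (Ioo a b)) :
    (g b - g a) * f x ≤ (g b - g x) * f a + (g x - g a) * f b := by
  have hIcc_left : Icc a x ⊆ Icc a b := Icc_subset_Icc le_rfl hxb.le
  have hIcc_right : Icc x b ⊆ Icc a b := Icc_subset_Icc hax.le le_rfl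
  obtain ⟨ξ, hξ, hξ_eq⟩ := exists_ratio_hasDerivAt_eq_ratio_slope f f' hax (hf.mono hIcc_left)
    (fun y hy => hff' y ⟨hy.1, hy.2.trans hxb⟩) g g' (hg.mono hIcc_left)
    (fun y hy => hgg' y ⟨hy.1, hy.2.trans hxb⟩)
  obtain ⟨η, hη, hη_eq⟩ := exists_ratio_hasDerivAt_eq_ratio_slope f f' hxb (hf.mono hIcc_right)
    (fun y hy => hff' y ⟨hax.trans hy.1, hy.2⟩) g g' (hg.mono hIcc_right)
    (fun y hy => hgg' y ⟨hax.trans hy.1, hy.2⟩)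
  have hξ' : ξ ∈ Ioo a b := ⟨hξ.1, hξ.2.trans hxb⟩
  have hη' : η ∈ Ioo a b := ⟨hax.trans hη.1, hη.2⟩
  have hg_strictMono : StrictMonoOn g (Icc a b) :=
    strictMonoOn_of_deriv_pos (convex_Icc a b) hg fun y hy => by
      rw [interior_Icc] at hy
      exact (hgg' y hy).deriv ▸ hg'_pos y hy
  have hgax : g a < g x := hg_strictMono (left_mem_Icc.2 (hax.trans hxb).le) ⟨hax.le, hxb.le⟩ hax
  have hgxb : g x < g b := hg_strictMono ⟨hax.le, hxb.le⟩ (right_mem_Icc.2 (hax.trans hxb).le) hxb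
  have hslope_left : f x - f a = (g x - g a) * (f' ξ / g' ξ) := by
    field_simp [(hg'_pos ξ hξ').ne']
    linarith
  have hslope_right : f b - f x = (g b - g x) * (f' η / g' η) := by
    field_simp [(hg'_pos η hη').ne']
    linarith
  have hratio := mul_le_mul_of_nonneg_left (hmono hξ' hη' (hξ.2.trans hη.1).le)
    (mul_nonneg (sub_pos.2 hgax).le (sub_pos.2 hgxb).le)
  linear_combination (g b - g x) * hslope_left - (g x - g a) * hslope_right + hratio

theorem monotoneOn_exp_mul_deriv {h : ℝ → ℝ} {c a b : ℝ}
    (hd2 : ∀ t ∈ Ioo a b, DifferentiableAt ℝ (deriv h) t)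
    (hineq : ∀ t ∈ Ioo a b, c * deriv h t ≤ deriv (deriv h) t) :
    MonotoneOn (fun t => exp (-c * t) * deriv h t) (Ioo a b) := by
  have hderiv : ∀ t ∈ Ioo a b, HasDerivAt (fun t => exp (-c * t) * deriv h t)
      (exp (-c * t) * (deriv (deriv h) t - c * deriv h t)) t := fun t ht => by
    refine ((((hasDerivAt_id t).const_mul (-c)).exp).mul (hd2 t ht).hasDerivAt).congr_deriv ?_
    simp only [id]
    ring
  apply monotoneOn_of_deriv_nonneg (convex_Ioo a b)
  · exact fun t ht => (hderiv t ht).continuousAt.continuousWithinAt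
  · rw [interior_Ioo]
    exact fun t ht => (hderiv t ht).differentiableAt.differentiableWithinAt
  · rw [interior_Ioo]
    intro t ht
    rw [(hderiv t ht).deriv]
    exact mul_nonneg (exp_pos _).le (sub_nonneg.2 (hineq t ht))

theorem exp_chord_le_of_mul_deriv_le_deriv_deriv {h : ℝ → ℝ} {c a x b : ℝ} (hc : c ≠ 0)
    (hax : a < x) (hxb : x < b) (hcont : ContinuousOn h (Icc a b))
    (hd : ∀ t ∈ Ioo a b, DifferentiableAt ℝ h t)
    (hd2 : ∀ t ∈ Ioo a b, DifferentiableAt ℝ (deriv h) t)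
    (hineq : ∀ t ∈ Ioo a b, c * deriv h t ≤ deriv (deriv h) t) :
    (exp (c * b) / c - exp (c * a) / c) * h x ≤
      (exp (c * b) / c - exp (c * x) / c) * h a + (exp (c * x) / c - exp (c * a) / c) * h b := by
  refine chord_le_of_monotoneOn_div_deriv
    (g := fun t => exp (c * t) / c) (g' := fun t => exp (c * t))
    hax hxb hcont (by fun_prop) (fun t ht => (hd t ht).hasDerivAt) (fun t _ => ?_)
    (fun t _ => exp_pos _) ((monotoneOn_exp_mul_deriv hd2 hineq).congr fun t _ => ?_)
  · refine (((hasDerivAt_id t).const_mul c).exp.div_const c).congr_deriv ?_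
    field_simp
    simp
  · simp only [neg_mul, exp_neg]
    ring

theorem forward_backward_chord_nonneg {lam : ℝ} (hlam : 0 < lam) {hf hb : ℝ → ℝ}
    (hfc : ContinuousOn hf (Icc 0 1)) (hbc : ContinuousOn hb (Icc 0 1))
    (hfd : ∀ t ∈ Ioo (0:ℝ) 1, DifferentiableAt ℝ hf t)
    (hfd2 : ∀ t ∈ Ioo (0:ℝ) 1, DifferentiableAt ℝ (deriv hf) t)
    (hbd : ∀ t ∈ Ioo (0:ℝ) 1, DifferentiableAt ℝ hb t)
    (hbd2 : ∀ t ∈ Ioo (0:ℝ) 1, DifferentiableAt ℝ (deriv hb) t)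
    (hfineq : ∀ t ∈ Ioo (0:ℝ) 1, -lam * deriv hf t ≤ deriv (deriv hf) t)
    (hbineq : ∀ t ∈ Ioo (0:ℝ) 1, lam * deriv hb t ≤ deriv (deriv hb) t)
    (hnonneg : ∀ t ∈ Ioo (0:ℝ) 1, 0 ≤ hf t + hb t) (hend : hf 1 + hb 1 = 0)
    {t : ℝ} (ht : t ∈ Ioo (0:ℝ) 1) :
    0 ≤ hf 0 + hb 1 + (hb 0 - hb 1) * exp (lam * t) := by
  have hF := mul_le_mul_of_nonneg_left (exp_chord_le_of_mul_deriv_le_deriv_deriv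
    (neg_ne_zero.2 hlam.ne') ht.1 ht.2 hfc hfd hfd2 hfineq) hlam.le
  have hB := mul_le_mul_of_nonneg_left (exp_chord_le_of_mul_deriv_le_deriv_deriv
    hlam.ne' ht.1 ht.2 hbc hbd hbd2 hbineq) hlam.le
  simp only [mul_zero, mul_one, exp_zero] at hF hB
  field_simp at hF hB
  have hinv : exp (-lam) * exp lam = 1 := by rw [← exp_add]; simp
  have hinv_t : exp (-(lam * t)) * exp (lam * t) = 1 := by rw [← exp_add]; simp
  have hsum : (1 - exp (-lam)) * (hf t + hb t) ≤
      (exp (-(lam * t)) - exp (-lam)) * (hf 0 + hb 1 + (hb 0 - hb 1) * exp (lam * t)) := by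
    linear_combination hF + mul_le_mul_of_nonneg_left hB (exp_pos (-lam)).le
      - (hb 0 - hb 1) * hinv_t + (hb 0 - hb t) * hinv - (exp (-(lam * t)) - 1) * hend
  have hE : 0 ≤ 1 - exp (-lam) := sub_nonneg.2 (exp_le_one_iff.2 (neg_nonpos.2 hlam.le))
  have hweight : 0 < exp (-(lam * t)) - exp (-lam) :=
    sub_pos.2 (exp_lt_exp.2 (by nlinarith [ht.2]))
  exact nonneg_of_mul_nonneg_right ((mul_nonneg hE (hnonneg t ht)).trans hsum) hweight

/-- The analytic core of Corollary 1.5: if moreover the entropy `h_f + h_b` is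
nonnegative on `[0,1]` and vanishes at `t = 1`, then the entropic cost
`h_f(0)+h_b(1)` is bounded by `H_U(μ)/(1-exp(-λ))`. -/
theorem entropic_cost_bound_invariant_measure
    (lam : ℝ) (hlam : 0 < lam) (hf hb : ℝ → ℝ)
    (hfc : ContinuousOn hf (Set.Icc 0 1))
    (hbc : ContinuousOn hb (Set.Icc 0 1))
    (hfd : ∀ t ∈ Set.Ioo (0:ℝ) 1, DifferentiableAt ℝ hf t)
    (hfd2 : ∀ t ∈ Set.Ioo (0:ℝ) 1, DifferentiableAt ℝ (deriv hf) t)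
    (hbd : ∀ t ∈ Set.Ioo (0:ℝ) 1, DifferentiableAt ℝ hb t)
    (hbd2 : ∀ t ∈ Set.Ioo (0:ℝ) 1, DifferentiableAt ℝ (deriv hb) t)
    (hfineq : ∀ t ∈ Set.Ioo (0:ℝ) 1, deriv (deriv hf) t ≥ -lam * deriv hf t)
    (hbineq : ∀ t ∈ Set.Ioo (0:ℝ) 1, deriv (deriv hb) t ≥ lam * deriv hb t)
    (hnonneg : ∀ t ∈ Set.Icc (0:ℝ) 1, hf t + hb t ≥ 0)
    (hend : hf 1 + hb 1 = 0) :
    hf 0 + hb 1 ≤ (hf 0 + hb 0) / (1 - Real.exp (-lam)) := by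
  have hkey : ∀ t ∈ Ioo (0:ℝ) 1, 0 ≤ hf 0 + hb 1 + (hb 0 - hb 1) * exp (lam * t) :=
    fun t ht => forward_backward_chord_nonneg hlam hfc hbc hfd hfd2 hbd hbd2 hfineq hbineq
      (fun s hs => hnonneg s (Ioo_subset_Icc_self hs)) hend ht
  have hkey_one : 0 ≤ hf 0 + hb 1 + (hb 0 - hb 1) * exp lam := by
    have hclosed : IsClosed {t : ℝ | 0 ≤ hf 0 + hb 1 + (hb 0 - hb 1) * exp (lam * t)} :=
      isClosed_le continuous_const (by fun_prop)
    have hone : (1:ℝ) ∈ closure (Ioo 0 1) := by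
      rw [closure_Ioo zero_ne_one]
      exact right_mem_Icc.2 zero_le_one
    simpa using hclosed.closure_subset_iff.2 hkey hone
  have hinv : exp (-lam) * exp lam = 1 := by rw [← exp_add]; simp
  rw [le_div_iff₀ (sub_pos.2 (exp_lt_one_iff.2 (neg_lt_zero.2 hlam)))]
  linear_combination mul_nonneg (exp_pos (-lam)).le hkey_one + (hb 0 - hb 1) * hinv
end

section
/- Let V : ℝ^d → ℝ be smooth, and let f̃, g̃ : (0,1) × ℝ^d → ℝ be smooth and everywhere positive, satisfying ∂_t f̃ = (1/2)Δf̃ − V·f̃ and ∂_t g̃ = −(1/2)Δg̃ + V·g̃. Set μ := f̃·g̃ and v := (1/2)∇(log g̃ − log f̃). Then the continuity equation ∂_t μ + div(μ·v) = 0 holds at every point of (0,1) × ℝ^d; equivalently, ∂_t(f̃·g̃) = (1/2)·div( f̃·g̃·(∇ log f̃ − ∇ log g̃) ). -/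
/-!
Both `f̃ g̃ ∇(log g̃ - log f̃)` and `f̃ g̃ (∇log f̃ - ∇log g̃)` are, up to sign and the factor `1/2`,
the flux `f̃ ∇g̃ - g̃ ∇f̃`, whose divergence is `f̃ Δg̃ - g̃ Δf̃` because the cross terms
`∇f̃ · ∇g̃` cancel. By the product rule and the two heat equations, `∂ₜ(f̃ g̃)` equals
`(1/2)(g̃ Δf̃ - f̃ Δg̃)`: the potential terms `∓ V f̃ g̃` cancel as well.
-/

noncomputable section

/-- Partial derivative in the `i`-th coordinate direction. -/
def pd {d : ℕ} (i : Fin d) (f : (Fin d → ℝ) → ℝ) (x : Fin d → ℝ) : ℝ :=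
  fderiv ℝ f x (Pi.single i 1)

/-- Spatial gradient. -/
def grad {d : ℕ} (f : (Fin d → ℝ) → ℝ) (x : Fin d → ℝ) : Fin d → ℝ :=
  fun i => pd i f x

/-- Spatial Laplacian. -/
def lap {d : ℕ} (f : (Fin d → ℝ) → ℝ) (x : Fin d → ℝ) : ℝ :=
  ∑ i, pd i (pd i f) x

/-- Spatial divergence of a vector field. -/
def dvg {d : ℕ} (w : (Fin d → ℝ) → Fin d → ℝ) (x : Fin d → ℝ) : ℝ :=
  ∑ i, pd i (fun y => w y i) x

open Real Set

section PartialDerivatives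

variable {d : ℕ} (i : Fin d) {f g : (Fin d → ℝ) → ℝ} {x : Fin d → ℝ}

lemma contDiff_pd {n : WithTop ℕ∞} (hf : ContDiff ℝ (n + 1) f) : ContDiff ℝ n (pd i f) :=
  (hf.fderiv_right le_rfl).clm_apply contDiff_const

lemma pd_mul (hf : DifferentiableAt ℝ f x) (hg : DifferentiableAt ℝ g x) :
    pd i (fun y => f y * g y) x = pd i f x * g x + f x * pd i g x := by
  simp only [pd, fderiv_fun_mul hf hg, add_apply, smul_apply, smul_eq_mul]
  ring

lemma pd_sub (hf : DifferentiableAt ℝ f x) (hg : DifferentiableAt ℝ g x) :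
    pd i (fun y => f y - g y) x = pd i f x - pd i g x := by
  simp only [pd, fderiv_fun_sub hf hg, sub_apply]

lemma pd_const_mul (c : ℝ) : pd i (fun y => c * f y) x = c * pd i f x := by
  simp only [pd]
  rw [show (fun y => c * f y) = c • f from rfl, fderiv_const_smul_field]
  rfl

lemma pd_log (hf : DifferentiableAt ℝ f x) (hfx : f x ≠ 0) :
    pd i (fun y => log (f y)) x = pd i f x / f x := by
  simp only [pd, (hf.hasFDerivAt.log hfx).fderiv, smul_apply, smul_eq_mul]
  ring

end PartialDerivatives

section VectorCalculus

variable {d : ℕ} {f g : (Fin d → ℝ) → ℝ}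

lemma dvg_const_mul (c : ℝ) (w : (Fin d → ℝ) → Fin d → ℝ) (x : Fin d → ℝ) :
    dvg (fun y j => c * w y j) x = c * dvg w x := by
  simp only [dvg, pd_const_mul, Finset.mul_sum]

lemma dvg_mul_grad_sub_mul_grad (hf : ContDiff ℝ 2 f) (hg : ContDiff ℝ 2 g) (x : Fin d → ℝ) :
    dvg (fun y j => f y * grad g y j - g y * grad f y j) x = f x * lap g x - g x * lap f x := by
  have hf' : Differentiable ℝ f := hf.differentiable two_ne_zero
  have hg' : Differentiable ℝ g := hg.differentiable two_ne_zero
  have hpd {h : (Fin d → ℝ) → ℝ} (hh : ContDiff ℝ 2 h) (i : Fin d) : Differentiable ℝ (pd i h) :=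
    (contDiff_pd i hh).differentiable one_ne_zero
  simp only [dvg, lap, grad, Finset.mul_sum, ← Finset.sum_sub_distrib]
  refine Finset.sum_congr rfl fun i _ => ?_
  rw [pd_sub i ((hf' x).fun_mul (hpd hg i x)) ((hg' x).fun_mul (hpd hf i x)),
    pd_mul i (hf' x) (hpd hg i x), pd_mul i (hg' x) (hpd hf i x)]
  ring

variable {y : Fin d → ℝ} (hf : DifferentiableAt ℝ f y) (hg : DifferentiableAt ℝ g y)
  (hfy : f y ≠ 0) (hgy : g y ≠ 0) (j : Fin d)
include hf hg hfy hgy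

lemma mul_mul_sub_grad_log :
    f y * g y * (grad (fun z => log (f z)) y j - grad (fun z => log (g z)) y j)
      = g y * grad f y j - f y * grad g y j := by
  simp only [grad, pd_log j hf hfy, pd_log j hg hgy]
  field_simp

lemma mul_mul_grad_log_sub_log :
    f y * g y * grad (fun z => log (f z) - log (g z)) y j
      = g y * grad f y j - f y * grad g y j := by
  rw [← mul_mul_sub_grad_log hf hg hfy hgy]
  exact congrArg _ (pd_sub j (hf.log hfy) (hg.log hgy))

end VectorCalculus

section Slices

variable {E : Type*} [NormedAddCommGroup E] [NormedSpace ℝ E] {n : WithTop ℕ∞}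
  {F : ℝ → E → ℝ} {s : Set ℝ} {t : ℝ}

lemma ContDiffOn.contDiff_slice (hF : ContDiffOn ℝ n (fun p : ℝ × E => F p.1 p.2) (s ×ˢ univ))
    (ht : t ∈ s) : ContDiff ℝ n (F t) :=
  contDiffOn_univ.mp <|
    hF.comp (contDiff_const.prodMk contDiff_id).contDiffOn fun _ _ => ⟨ht, trivial⟩

lemma ContDiffOn.differentiableAt_time_slice
    (hF : ContDiffOn ℝ n (fun p : ℝ × E => F p.1 p.2) (s ×ˢ univ)) (hs : IsOpen s)
    (hn : n ≠ 0) (ht : t ∈ s) (x : E) : DifferentiableAt ℝ (fun s => F s x) t :=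
  ((hF.contDiffAt ((hs.prod isOpen_univ).mem_nhds ⟨ht, trivial⟩)).comp t
    (contDiffAt_id.prodMk contDiffAt_const)).differentiableAt hn

end Slices

theorem continuity_equation_bridge_general
    (d : ℕ)
    (V : (Fin d → ℝ) → ℝ)
    (F G : ℝ → (Fin d → ℝ) → ℝ)
    (hF : ContDiffOn ℝ (⊤ : ℕ∞) (fun p : ℝ × (Fin d → ℝ) => F p.1 p.2)
      (Set.Ioo 0 1 ×ˢ Set.univ))
    (hG : ContDiffOn ℝ (⊤ : ℕ∞) (fun p : ℝ × (Fin d → ℝ) => G p.1 p.2)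
      (Set.Ioo 0 1 ×ˢ Set.univ))
    (hFpos : ∀ t ∈ Set.Ioo (0:ℝ) 1, ∀ x, 0 < F t x)
    (hGpos : ∀ t ∈ Set.Ioo (0:ℝ) 1, ∀ x, 0 < G t x)
    (heF : ∀ t ∈ Set.Ioo (0:ℝ) 1, ∀ x,
      deriv (fun s => F s x) t = (1/2) * lap (F t) x - V x * F t x)
    (heG : ∀ t ∈ Set.Ioo (0:ℝ) 1, ∀ x,
      deriv (fun s => G s x) t = -(1/2) * lap (G t) x + V x * G t x) :
    ∀ t ∈ Set.Ioo (0:ℝ) 1, ∀ x,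
      (deriv (fun s => F s x * G s x) t
          + dvg (fun y j => F t y * G t y *
              ((1/2) * grad (fun z => Real.log (G t z) - Real.log (F t z)) y j)) x = 0)
      ∧ (deriv (fun s => F s x * G s x) t
          = (1/2) * dvg (fun y j => F t y * G t y *
              (grad (fun z => Real.log (F t z)) y j
                - grad (fun z => Real.log (G t z)) y j)) x) := by
  intro t ht x
  have hFt : ContDiff ℝ 2 (F t) := (hF.contDiff_slice ht).of_le (WithTop.coe_le_coe.mpr le_top)
  have hGt : ContDiff ℝ 2 (G t) := (hG.contDiff_slice ht).of_le (WithTop.coe_le_coe.mpr le_top)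
  have hF' := hFt.differentiable two_ne_zero
  have hG' := hGt.differentiable two_ne_zero
  have hFne y := (hFpos t ht y).ne'
  have hGne y := (hGpos t ht y).ne'
  have hμ : deriv (fun s => F s x * G s x) t
      = (1/2) * (G t x * lap (F t) x - F t x * lap (G t) x) := by
    rw [deriv_fun_mul (hF.differentiableAt_time_slice isOpen_Ioo (by simp) ht x)
      (hG.differentiableAt_time_slice isOpen_Ioo (by simp) ht x), heF t ht x, heG t ht x]
    ring
  have hvelocity : (fun y j => F t y * G t y *
      ((1/2) * grad (fun z => log (G t z) - log (F t z)) y j))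
      = fun y j => (1/2) * (F t y * grad (G t) y j - G t y * grad (F t) y j) := by
    funext y j
    rw [mul_left_comm, mul_comm (F t y),
      mul_mul_grad_log_sub_log (hG' y) (hF' y) (hGne y) (hFne y)]
  have hflux : (fun y j => F t y * G t y *
      (grad (fun z => log (F t z)) y j - grad (fun z => log (G t z)) y j))
      = fun y j => G t y * grad (F t) y j - F t y * grad (G t) y j := by
    funext y j
    exact mul_mul_sub_grad_log (hF' y) (hG' y) (hFne y) (hGne y) j
  rw [hvelocity, hflux, dvg_const_mul, dvg_mul_grad_sub_mul_grad hFt hGt,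
    dvg_mul_grad_sub_mul_grad hGt hFt, hμ]
  constructor <;> ring

/-- Lemma 3.2 of the paper (computational core): `μ := f̃ g̃` together with the
velocity field `v := (1/2)∇(log g̃ - log f̃)` satisfy the continuity equation
`∂ₜ μ + div(μ v) = 0`; equivalently `∂ₜ(f̃ g̃) = (1/2) div(f̃ g̃ (∇log f̃ - ∇log g̃))`. -/
theorem continuity_equation_bridge
    (d : ℕ) (hd : 1 ≤ d)
    (V : (Fin d → ℝ) → ℝ) (hV : ContDiff ℝ (⊤ : ℕ∞) V)
    (F G : ℝ → (Fin d → ℝ) → ℝ)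
    (hF : ContDiffOn ℝ (⊤ : ℕ∞) (fun p : ℝ × (Fin d → ℝ) => F p.1 p.2)
      (Set.Ioo 0 1 ×ˢ Set.univ))
    (hG : ContDiffOn ℝ (⊤ : ℕ∞) (fun p : ℝ × (Fin d → ℝ) => G p.1 p.2)
      (Set.Ioo 0 1 ×ˢ Set.univ))
    (hFpos : ∀ t ∈ Set.Ioo (0:ℝ) 1, ∀ x, 0 < F t x)
    (hGpos : ∀ t ∈ Set.Ioo (0:ℝ) 1, ∀ x, 0 < G t x)
    (heF : ∀ t ∈ Set.Ioo (0:ℝ) 1, ∀ x,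
      deriv (fun s => F s x) t = (1/2) * lap (F t) x - V x * F t x)
    (heG : ∀ t ∈ Set.Ioo (0:ℝ) 1, ∀ x,
      deriv (fun s => G s x) t = -(1/2) * lap (G t) x + V x * G t x) :
    ∀ t ∈ Set.Ioo (0:ℝ) 1, ∀ x,
      (deriv (fun s => F s x * G s x) t
          + dvg (fun y j => F t y * G t y *
              ((1/2) * grad (fun z => Real.log (G t z) - Real.log (F t z)) y j)) x = 0)
      ∧ (deriv (fun s => F s x * G s x) t
          = (1/2) * dvg (fun y j => F t y * G t y *
              (grad (fun z => Real.log (F t z)) y j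
                - grad (fun z => Real.log (G t z)) y j)) x) :=
  continuity_equation_bridge_general d V F G hF hG hFpos hGpos heF heG

end
end

section
/- Fix α > 0 and ε ∈ (0,1), and let f : ℝ → ℝ be measurable, bounded, nonnegative, compactly supported, and not almost everywhere zero. For t ∈ (0,1] set γ(t) := 2α/(1 − exp(−2αt)) and p_t(x,z) := √(γ(t)/(2π))·exp(−γ(t)·(z − exp(−αt)·x)²/2), and define f_t(x) := ∫_ℝ p_t(x,z)·f(z) dz (so f_t(x) > 0 for all x and x ↦ log f_t(x) is smooth). Then there exists a constant C such that for all t ∈ [ε, 1−ε] and all x ∈ ℝ: |(d/dx)² (log f_t)(x)| ≤ C. -/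
/-!
Completing the square in the Gaussian kernel gives
`f_t(x) = √(γ/2π) · exp (-γ m² x² / 2) · M(x)` with `m = exp (-α t)`, where `M` is the moment
generating function of `z ↦ γ m z` under the finite measure `exp (-γ z² / 2) f(z) dz`.
Hence `(log f_t)'' = -γ m² + Λ''` for the cumulant generating function `Λ = log M`.
Now `Λ''(x)` is the variance of `γ m z` under the exponentially tilted measure, so it lies in
`[0, (γ m R)²]` when `f` vanishes outside `[-R, R]`; and since `γ` is decreasing,
`γ m² ≤ γ m ≤ γ(ε)` for `t ≥ ε`.
-/

open MeasureTheory

noncomputable section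

/-- `γ(t) = 2α/(1 - exp(-2αt))`. -/
def gam (α t : ℝ) : ℝ := 2 * α / (1 - Real.exp (-(2 * α * t)))

/-- The transition density of the stationary one-dimensional Ornstein–Uhlenbeck
process: `p_t(x,z) = √(γ(t)/(2π)) exp(-γ(t)(z - exp(-αt)x)²/2)`. -/
def ouKernel (α t x z : ℝ) : ℝ :=
  Real.sqrt (gam α t / (2 * Real.pi)) *
    Real.exp (-(gam α t * (z - Real.exp (-(α * t)) * x)^2 / 2))

/-- `f_t(x) = ∫ p_t(x,z) f(z) dz`. -/
def ouPotential (α : ℝ) (f : ℝ → ℝ) (t x : ℝ) : ℝ :=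
  ∫ z, ouKernel α t x z * f z

open Real

namespace ProbabilityTheory

variable {Ω : Type*} {m : MeasurableSpace Ω} {X : Ω → ℝ} {μ : Measure Ω} {R v : ℝ}

lemma integrableExpSet_eq_univ_of_ae_abs_le [IsFiniteMeasure μ] (hX : AEMeasurable X μ)
    (hR : ∀ᵐ ω ∂μ, |X ω| ≤ R) : integrableExpSet X μ = Set.univ := by
  refine Set.eq_univ_of_forall fun t => ?_
  refine Integrable.of_bound (by fun_prop) (exp (|t| * R)) ?_
  filter_upwards [hR] with ω hω
  rw [norm_of_nonneg (exp_nonneg _), exp_le_exp]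
  calc t * X ω ≤ |t| * |X ω| := by rw [← abs_mul]; exact le_abs_self _
    _ ≤ |t| * R := by gcongr

lemma iteratedDeriv_two_cgf_nonneg (hv : v ∈ interior (integrableExpSet X μ)) :
    0 ≤ iteratedDeriv 2 (cgf X μ) v := by
  rw [iteratedDeriv_two_cgf_eq_integral hv]
  exact div_nonneg (integral_nonneg fun ω => by positivity) mgf_nonneg

lemma iteratedDeriv_two_cgf_le_sq (hv : v ∈ interior (integrableExpSet X μ))
    (hR : ∀ᵐ ω ∂μ, |X ω| ≤ R) : iteratedDeriv 2 (cgf X μ) v ≤ R ^ 2 := by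
  have hmoment : μ[fun ω => X ω ^ 2 * exp (v * X ω)] ≤ R ^ 2 * mgf X μ v := by
    rw [mgf, ← integral_const_mul]
    refine integral_mono_ae (integrable_pow_mul_exp_of_mem_interior_integrableExpSet hv 2)
      ((interior_subset (s := integrableExpSet X μ) hv).const_mul _) ?_
    filter_upwards [hR] with ω hω
    exact mul_le_mul_of_nonneg_right (sq_le_sq' (abs_le.1 hω).1 (abs_le.1 hω).2) (exp_nonneg _)
  rw [iteratedDeriv_two_cgf hv]
  exact (sub_le_self _ (sq_nonneg _)).trans (div_le_of_le_mul₀ mgf_nonneg (sq_nonneg R) hmoment)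

end ProbabilityTheory

open ProbabilityTheory

variable {α s t γ R : ℝ} {f : ℝ → ℝ}

lemma gam_pos (hα : 0 < α) (ht : 0 < t) : 0 < gam α t :=
  div_pos (by positivity) (sub_pos.2 (exp_lt_one_iff.2 (by nlinarith)))

lemma gam_le_gam_of_le (hα : 0 < α) (hs : 0 < s) (hst : s ≤ t) : gam α t ≤ gam α s := by
  refine div_le_div_of_nonneg_left (by positivity)
    (sub_pos.2 (exp_lt_one_iff.2 (by nlinarith))) ?_
  gcongr

def gaussianWeightedMeasure (γ : ℝ) (f : ℝ → ℝ) : Measure ℝ :=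
  volume.withDensity fun z => ENNReal.ofReal (exp (-(γ * z ^ 2 / 2)) * f z)

lemma integral_gaussianWeightedMeasure (hf : Measurable f) (hnn : ∀ z, 0 ≤ f z) (φ : ℝ → ℝ) :
    ∫ z, φ z ∂gaussianWeightedMeasure γ f = ∫ z, exp (-(γ * z ^ 2 / 2)) * f z * φ z := by
  rw [gaussianWeightedMeasure, integral_withDensity_eq_integral_toReal_smul (by fun_prop)
    (.of_forall fun _ => ENNReal.ofReal_lt_top)]
  simp_rw [ENNReal.toReal_ofReal (mul_nonneg (exp_nonneg _) (hnn _)), smul_eq_mul]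

lemma isFiniteMeasure_gaussianWeightedMeasure (hγ : 0 ≤ γ) (hint : Integrable f) :
    IsFiniteMeasure (gaussianWeightedMeasure γ f) := by
  refine isFiniteMeasure_withDensity_ofReal (hint.mono (by fun_prop) (.of_forall fun z => ?_)).2
  rw [norm_mul, norm_of_nonneg (exp_nonneg _)]
  exact mul_le_of_le_one_left (norm_nonneg _) (exp_le_one_iff.2 (by nlinarith [sq_nonneg z]))

lemma gaussianWeightedMeasure_ne_zero (hf : Measurable f) (hnn : ∀ z, 0 ≤ f z)
    (hne : ¬ f =ᵐ[volume] 0) : gaussianWeightedMeasure γ f ≠ 0 := by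
  rw [gaussianWeightedMeasure, Ne, withDensity_eq_zero_iff (by fun_prop)]
  refine fun h => hne ?_
  filter_upwards [h] with z hz
  have := ENNReal.ofReal_eq_zero.1 hz
  exact le_antisymm (nonpos_of_mul_nonpos_right this (exp_pos _)) (hnn z)

lemma ae_abs_mul_le_gaussianWeightedMeasure (hf : Measurable f) (hR : ∀ z, f z ≠ 0 → |z| ≤ R)
    (c : ℝ) : ∀ᵐ z ∂gaussianWeightedMeasure γ f, |c * z| ≤ |c| * R := by
  rw [gaussianWeightedMeasure, ae_withDensity_iff (by fun_prop)]
  refine .of_forall fun z hz => ?_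
  rw [abs_mul]
  refine mul_le_mul_of_nonneg_left (hR z fun h => hz ?_) (abs_nonneg c)
  simp [h]

lemma integrableExpSet_gaussianWeightedMeasure (hγ : 0 ≤ γ) (hf : Measurable f)
    (hint : Integrable f) (hR : ∀ z, f z ≠ 0 → |z| ≤ R) (c : ℝ) :
    integrableExpSet (fun z => c * z) (gaussianWeightedMeasure γ f) = Set.univ :=
  have := isFiniteMeasure_gaussianWeightedMeasure hγ hint
  integrableExpSet_eq_univ_of_ae_abs_le (by fun_prop)
    (ae_abs_mul_le_gaussianWeightedMeasure hf hR c)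

lemma ouPotential_eq_mul_mgf (hf : Measurable f) (hnn : ∀ z, 0 ≤ f z) (x : ℝ) :
    ouPotential α f t x = √(gam α t / (2 * π)) *
      exp (-(gam α t * exp (-(α * t)) ^ 2 * x ^ 2 / 2)) *
      mgf (fun z => gam α t * exp (-(α * t)) * z) (gaussianWeightedMeasure (gam α t) f) x := by
  rw [mgf, integral_gaussianWeightedMeasure hf hnn, ← integral_const_mul, ouPotential]
  congr 1 with z
  have hsq : exp (-(gam α t * (z - exp (-(α * t)) * x) ^ 2 / 2)) =
      exp (-(gam α t * exp (-(α * t)) ^ 2 * x ^ 2 / 2)) *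
        (exp (-(gam α t * z ^ 2 / 2)) * exp (x * (gam α t * exp (-(α * t)) * z))) := by
    rw [← exp_add, ← exp_add]
    ring_nf
  rw [ouKernel, hsq]
  ring

lemma log_ouPotential_eq (hα : 0 < α) (ht : 0 < t) (hf : Measurable f) (hnn : ∀ z, 0 ≤ f z)
    (hint : Integrable f) (hR : ∀ z, f z ≠ 0 → |z| ≤ R) (hne : ¬ f =ᵐ[volume] 0) :
    (fun y => log (ouPotential α f t y)) = fun y => log √(gam α t / (2 * π)) +
      (-(gam α t * exp (-(α * t)) ^ 2 / 2) * y ^ 2 +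
        cgf (fun z => gam α t * exp (-(α * t)) * z) (gaussianWeightedMeasure (gam α t) f) y) := by
  funext y
  have hγ := gam_pos hα ht
  have hmgf : 0 < mgf (fun z => gam α t * exp (-(α * t)) * z)
      (gaussianWeightedMeasure (gam α t) f) y :=
    mgf_pos' (gaussianWeightedMeasure_ne_zero hf hnn hne)
      (integrable_of_mem_integrableExpSet
        (by simp [integrableExpSet_gaussianWeightedMeasure hγ.le hf hint hR]))
  rw [ouPotential_eq_mul_mgf hf hnn, log_mul (by positivity) hmgf.ne', log_mul (by positivity)
    (exp_pos _).ne', log_exp, cgf]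
  ring

lemma abs_iteratedDeriv_two_log_ouPotential_le (hα : 0 < α) (ht : 0 < t) (hf : Measurable f)
    (hnn : ∀ z, 0 ≤ f z) (hint : Integrable f) (hR : ∀ z, f z ≠ 0 → |z| ≤ R)
    (hne : ¬ f =ᵐ[volume] 0) (x : ℝ) :
    |iteratedDeriv 2 (fun y => log (ouPotential α f t y)) x| ≤
      gam α t * exp (-(α * t)) ^ 2 + (gam α t * exp (-(α * t)) * R) ^ 2 := by
  have hγ := gam_pos hα ht
  set β := gam α t * exp (-(α * t))
  have hx :
      x ∈ interior (integrableExpSet (fun z => β * z) (gaussianWeightedMeasure (gam α t) f)) := by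
    simp [integrableExpSet_gaussianWeightedMeasure hγ.le hf hint hR]
  have hcgf_nonneg := iteratedDeriv_two_cgf_nonneg hx
  have hcgf_le := iteratedDeriv_two_cgf_le_sq hx (ae_abs_mul_le_gaussianWeightedMeasure hf hR β)
  rw [abs_of_pos (by positivity)] at hcgf_le
  rw [log_ouPotential_eq hα ht hf hnn hint hR hne, iteratedDeriv_const_add two_pos,
    iteratedDeriv_fun_add (by fun_prop) (analyticAt_cgf hx).contDiffAt,
    iteratedDeriv_const_mul_field, iteratedDeriv_pow]
  have hk : 0 ≤ gam α t * exp (-(α * t)) ^ 2 := by positivity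
  norm_num
  rw [abs_le]
  constructor <;> linarith

/-- Lemma 5.2 (iii) of the paper: a uniform bound on the second logarithmic
derivative of the forward Schrödinger potential `f_t`, uniform in `x ∈ ℝ` and
`t ∈ [ε, 1-ε]`. -/
theorem ou_log_second_derivative_uniform_bound
    (α ε : ℝ) (hα : 0 < α) (hε : ε ∈ Set.Ioo (0:ℝ) 1)
    (f : ℝ → ℝ) (hmeas : Measurable f)
    (hbdd : ∃ C, ∀ z, f z ≤ C) (hnn : ∀ z, 0 ≤ f z)
    (hsupp : HasCompactSupport f)
    (hne : ¬ (f =ᵐ[volume] 0)) :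
    ∃ C : ℝ, ∀ t ∈ Set.Icc ε (1 - ε), ∀ x : ℝ,
      |iteratedDeriv 2 (fun y => Real.log (ouPotential α f t y)) x| ≤ C := by
  obtain ⟨Cf, hCf⟩ := hbdd
  obtain ⟨R, hR⟩ := hsupp.isCompact.isBounded.subset_closedBall 0
  have hfR : ∀ z, f z ≠ 0 → |z| ≤ R := fun z hz => by
    simpa using hR (subset_tsupport f hz)
  have hint : Integrable f :=
    (integrableOn_iff_integrable_of_support_subset (subset_tsupport f)).1 <|
      Measure.integrableOn_of_bounded hsupp.isCompact.measure_ne_top hmeas.aestronglyMeasurable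
        (M := Cf) (.of_forall fun z => (norm_of_nonneg (hnn z)).trans_le (hCf z))
  refine ⟨gam α ε + (gam α ε * R) ^ 2, fun t ht x => ?_⟩
  have ht0 : 0 < t := hε.1.trans_le ht.1
  have hγ : 0 < gam α t := gam_pos hα ht0
  have hm : exp (-(α * t)) ≤ 1 := exp_le_one_iff.2 (by nlinarith)
  have hγε : gam α t ≤ gam α ε := gam_le_gam_of_le hα hε.1 ht.1
  have hβ : gam α t * exp (-(α * t)) ≤ gam α ε := (mul_le_of_le_one_right hγ.le hm).trans hγε
  have hk : gam α t * exp (-(α * t)) ^ 2 ≤ gam α ε :=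
    (mul_le_of_le_one_right hγ.le (pow_le_one₀ (exp_nonneg _) hm)).trans hγε
  refine (abs_iteratedDeriv_two_log_ouPotential_le hα ht0 hmeas hnn hint hfR hne x).trans ?_
  rw [mul_pow, mul_pow (gam α ε)]
  gcongr

end
end
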